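/- (Envelope domination) Let λ ∈ (0,1) and let F_0 be a convex CDF on [0,1] with F_0(0) = 0, right derivative f_0(λ⁺) at λ, and F_0(λ) < 1. Define g_0(λ⁺) = f_0(λ⁺)/(1 - F_0(λ)) and suppose g_mix(λ⁺) ≥ g_0(λ⁺). Define F_fit(λ) = λ·g_mix(λ⁺)/(1 + λ·g_mix(λ⁺)), and F_fit(x) = (F_fit(λ)/λ)·x for x ∈ (0,λ], and F_fit(x) = F_fit(λ) + (1 - F_fit(λ))·G_mix(x) for x ∈ (λ,1], where G_mix is a right-tail CDF on [λ,1] satisfying G_mix(x) ≥ G_0(x) := (F_0(x) - F_0(λ))/(1 - F_0(λ)). Then F_fit(x) ≥ F_0(x) for all x ∈ (0,1]. -/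

import Mathlib

/-!
Convexity with `F0 0 = 0` gives two facts: on `(0, lam]` the graph of `F0` lies below the chord
`x ↦ (F0 lam / lam) x`, and the secant slope `F0 lam / lam` is at most the right derivative `f0`.
The second turns `g_mix(lam⁺) ≥ g_0(lam⁺)` into `F0 lam ≤ t (1 - F0 lam)` with `t = lam g_mix`,
i.e. the anchor `F_fit(lam) = t / (1 + t)` lies in `[F0 lam, 1]`. Hence the linear piece dominates
the chord, and on `(lam, 1]` the affine map `u ↦ c + (1 - c) (u - F0 lam) / (1 - F0 lam)` with
`c = F_fit(lam)` fixes `1`, raises `F0 lam` to `c`, and so dominates the identity below `1`.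
-/

open Set Filter

namespace ConvexOn

variable {S : Set ℝ} {f : ℝ → ℝ} {x y z f' : ℝ}

lemma slope_le_of_hasDerivWithinAt_Ioi (hfc : ConvexOn ℝ S f) (hx : x ∈ S) (hz : z ∈ S)
    (hxy : x < y) (hyz : y < z) (hf' : HasDerivWithinAt f f' (Ioi y) y) :
    slope f x y ≤ f' := by
  have hy : y ∈ S := hfc.1.ordConnected.out hx hz ⟨hxy.le, hyz.le⟩
  apply ge_of_tendsto <| (hasDerivWithinAt_iff_tendsto_slope' self_notMem_Ioi).mp hf'
  simp_rw [eventually_nhdsWithin_iff, slope_comm f x y, slope_def_field]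
  filter_upwards [eventually_lt_nhds hyz] with t ht (ht' : y < t)
  exact hfc.secant_mono hy hx (hfc.1.ordConnected.out hy hz ⟨ht'.le, ht.le⟩) hxy.ne ht'.ne'
    (hxy.trans ht').le

lemma div_le_div_of_map_zero (hfc : ConvexOn ℝ S f) (h0 : 0 ∈ S) (hf0 : f 0 = 0) (hx : x ∈ S)
    (hy : y ∈ S) (hx0 : 0 < x) (hxy : x ≤ y) : f x / x ≤ f y / y := by
  simpa [hf0] using hfc.secant_mono h0 hx hy hx0.ne' (hx0.trans_le hxy).ne' hxy

end ConvexOn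

lemma div_one_add_mem_Icc_of_le_mul_one_sub {a t : ℝ} (ha : 0 ≤ a) (ha1 : a < 1)
    (h : a ≤ t * (1 - a)) : t / (1 + t) ∈ Icc a 1 := by
  have ht : 0 ≤ t := by nlinarith
  constructor
  · rw [le_div_iff₀ (by linarith)]; linarith
  · rw [div_le_one (by linarith)]; linarith

lemma le_add_one_sub_mul_of_div_le {a c u G : ℝ} (ha1 : a < 1) (hc : c ∈ Icc a 1)
    (hG : (u - a) / (1 - a) ≤ G) (hG1 : G ≤ 1) : u ≤ c + (1 - c) * G := by
  have h1a : 0 < 1 - a := by linarith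
  have hu : u ≤ 1 := by linarith [(div_le_one h1a).1 (hG.trans hG1)]
  have hgap : c + (1 - c) * ((u - a) / (1 - a)) - u = (c - a) * (1 - u) / (1 - a) := by
    field_simp
    ring
  calc u ≤ c + (1 - c) * ((u - a) / (1 - a)) := by
        rw [← sub_nonneg, hgap]
        exact div_nonneg (mul_nonneg (by linarith [hc.1]) (by linarith)) h1a.le
    _ ≤ c + (1 - c) * G := by gcongr; linarith [hc.2]

/-- Envelope domination (Proposition 1): the fitted envelope, anchored at the
right-tail boundary density and reconstructed linearly on `(0,lam]` and via the
dominated right-tail CDF on `(lam,1]`, dominates the convex null CDF `F0`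
pointwise on `(0,1]`. -/
theorem stmt11 (lam : ℝ) (hlam : lam ∈ Set.Ioo (0:ℝ) 1)
    (F0 : ℝ → ℝ) (hconv : ConvexOn ℝ (Set.Icc (0:ℝ) 1) F0) (hF00 : F0 0 = 0)
    (hF0lt1 : F0 lam < 1) (hF0nonneg : ∀ x ∈ Set.Icc (0:ℝ) 1, 0 ≤ F0 x)
    (f0 : ℝ) (hderiv : HasDerivWithinAt F0 f0 (Set.Ici lam) lam)
    (gmix : ℝ) (hgmix : f0 / (1 - F0 lam) ≤ gmix)
    (Gmix : ℝ → ℝ)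
    (hGmixrange : ∀ x ∈ Set.Icc lam 1, Gmix x ∈ Set.Icc (0:ℝ) 1)
    (hGdom : ∀ x ∈ Set.Icc lam 1, (F0 x - F0 lam) / (1 - F0 lam) ≤ Gmix x) :
    ∀ x ∈ Set.Ioc (0:ℝ) 1,
      F0 x ≤
        (if x ≤ lam then
          (lam * gmix / (1 + lam * gmix) / lam) * x
        else
          lam * gmix / (1 + lam * gmix)
            + (1 - lam * gmix / (1 + lam * gmix)) * Gmix x) := by
  obtain ⟨hl0, hl1⟩ := hlam
  have hlamS : lam ∈ Icc (0:ℝ) 1 := ⟨hl0.le, hl1.le⟩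
  have h1A : 0 < 1 - F0 lam := by linarith
  have hslope : F0 lam / lam ≤ f0 := by
    simpa [slope_def_field, hF00] using hconv.slope_le_of_hasDerivWithinAt_Ioi
      (left_mem_Icc.2 zero_le_one) (right_mem_Icc.2 zero_le_one) hl0 hl1 hderiv.Ioi_of_Ici
  have hanchor : lam * gmix / (1 + lam * gmix) ∈ Icc (F0 lam) 1 := by
    refine div_one_add_mem_Icc_of_le_mul_one_sub (hF0nonneg lam hlamS) hF0lt1 ?_
    have h : F0 lam / (lam * (1 - F0 lam)) ≤ gmix := by
      rw [← div_div]; exact (div_le_div_of_nonneg_right hslope h1A.le).trans hgmix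
    rw [div_le_iff₀ (by positivity)] at h
    linarith
  rintro x ⟨hx0, hx1⟩
  split_ifs with hxl
  · calc F0 x = F0 x / x * x := by field_simp
      _ ≤ F0 lam / lam * x := mul_le_mul_of_nonneg_right (hconv.div_le_div_of_map_zero
          (left_mem_Icc.2 zero_le_one) hF00 ⟨hx0.le, hx1⟩ hlamS hx0 hxl) hx0.le
      _ ≤ _ := by gcongr; exact hanchor.1
  · have hxS : x ∈ Icc lam 1 := ⟨(not_le.1 hxl).le, hx1⟩
    exact le_add_one_sub_mul_of_div_le hF0lt1 hanchor (hGdom x hxS) (hGmixrange x hxS).2
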